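/- arXiv:2412.06219 — 2 statements merged into one kernel-verified Lean document; each statement's English description precedes it below -/
import Mathlib

section
/- Let Γ be a finite index set, w_n ∈ ℝ for n ∈ Γ, and δ_n = α_n^l if w_n ≤ 0, δ_n = α_n^u otherwise, with α_n^l ≤ α_n^u. Let λ > 0 and define s_1(x) = max(0, Σ_{n∈Γ} w_n(x_n - δ_n) + λ). If x satisfies α_n^l ≤ x_n ≤ α_n^u for all n ∈ Γ and Σ_{n∈Γ} |w_n(x_n - δ_n)| ≥ λ, then s_1(x) = 0. -/
/-- a clean input far from the trigger cannot activate the switch. -/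
theorem stmt1 {ι : Type*} (Γ : Finset ι) (w αl αu x : ι → ℝ) (lam : ℝ)
    (hlam : 0 < lam)
    (hbound : ∀ n ∈ Γ, αl n ≤ αu n)
    (δ : ι → ℝ) (hδ : ∀ n ∈ Γ, δ n = if w n ≤ 0 then αl n else αu n)
    (hx : ∀ n ∈ Γ, αl n ≤ x n ∧ x n ≤ αu n)
    (hfar : lam ≤ ∑ n ∈ Γ, |w n * (x n - δ n)|) :
    max 0 ((∑ n ∈ Γ, w n * (x n - δ n)) + lam) = 0 := by
  have key : ∀ n ∈ Γ, w n * (x n - δ n) ≤ 0 := by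
    intro n hn
    rcases le_or_gt (w n) 0 with h | h
    · have : δ n = αl n := by rw [hδ n hn, if_pos h]
      have := (hx n hn).1
      nlinarith [this]
    · have : δ n = αu n := by rw [hδ n hn, if_neg (not_le.mpr h)]
      have := (hx n hn).2
      nlinarith [this]
  have habs : ∑ n ∈ Γ, |w n * (x n - δ n)| = -∑ n ∈ Γ, w n * (x n - δ n) := by
    rw [← Finset.sum_neg_distrib]
    exact Finset.sum_congr rfl fun n hn => abs_of_nonpos (key n hn)
  rw [habs] at hfar
  have : (∑ n ∈ Γ, w n * (x n - δ n)) + lam ≤ 0 := by linarith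
  exact max_eq_left this
end

section
/- Let X_1, ..., X_e be i.i.d. uniform on [0,1], δ_n ∈ [0,1], |w_n| ≥ α > 0, and λ > 0. Then p := P(Σ_{n=1}^e |w_n (X_n - δ_n)| < λ) satisfies p ≤ (2λ)^e / (α^e · e!). -/
open MeasureTheory

/-!
Since every `|w n| ≥ α`, the event forces `(X_1, …, X_e)` into the ℓ¹-ball of radius `λ / α`
around `δ`. By independence the law of this vector is Lebesgue measure restricted to the unit cube,
hence at most Lebesgue measure, and the ℓ¹-ball of radius `r` in `ℝ^e` has volume `(2r)^e / e!`.
-/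

theorem ProbabilityTheory.iIndepFun.map_fun_eq_volume_restrict_pi {Ω ι : Type*}
    [MeasurableSpace Ω] [Fintype ι] {μ : Measure Ω} {X : ι → Ω → ℝ} {s : ι → Set ℝ}
    (hX : ∀ i, AEMeasurable (X i) μ) (hlaw : ∀ i, μ.map (X i) = volume.restrict (s i))
    (hindep : ProbabilityTheory.iIndepFun X μ) :
    μ.map (fun ω i ↦ X i ω) = volume.restrict (Set.univ.pi s) := by
  rw [hindep.map_fun_eq_pi_map hX, volume_pi, Measure.restrict_pi_pi]
  simp_rw [hlaw]

theorem volume_sum_abs_sub_lt {ι : Type*} [Fintype ι] (c : ι → ℝ) {r : ℝ} (hr : 0 < r) :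
    volume {x : ι → ℝ | ∑ i, |x i - c i| < r} =
      ENNReal.ofReal ((2 * r) ^ Fintype.card ι / (Fintype.card ι).factorial) := by
  have htrans : {x : ι → ℝ | ∑ i, |x i - c i| < r} =
      (· + -c) ⁻¹' {x | (∑ i, |x i| ^ (1 : ℝ)) ^ (1 / (1 : ℝ)) < r} := by
    ext x; simp [sub_eq_add_neg]
  rw [htrans, measure_preimage_add_right]
  cases isEmpty_or_nonempty ι
  · simp [hr, volume_pi]
  rw [volume_sum_rpow_lt ι le_rfl r, ← ENNReal.ofReal_pow hr.le,
    ← ENNReal.ofReal_mul (by positivity)]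
  congr 1
  norm_num [Real.Gamma_two, Real.Gamma_nat_eq_factorial]
  ring

theorem mul_sum_abs_le_sum_abs_mul {ι : Type*} (t : Finset ι) {α : ℝ} {w : ι → ℝ}
    (hw : ∀ i ∈ t, α ≤ |w i|) (x : ι → ℝ) :
    α * ∑ i ∈ t, |x i| ≤ ∑ i ∈ t, |w i * x i| := by
  rw [Finset.mul_sum]
  refine Finset.sum_le_sum fun i hi ↦ ?_
  rw [abs_mul]
  exact mul_le_mul_of_nonneg_right (hw i hi) (abs_nonneg _)

theorem stmt7_general {Ω : Type*} [MeasurableSpace Ω] (μ : Measure Ω)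
    (e : ℕ) (X : Fin e → Ω → ℝ) (δ w : Fin e → ℝ) (α lam : ℝ)
    (hα : 0 < α) (hlam : 0 < lam)
    (hunif : ∀ n, Measure.map (X n) μ = (volume.restrict (Set.Icc (0:ℝ) 1)))
    (hindep : ProbabilityTheory.iIndepFun X μ)
    (hw : ∀ n, α ≤ |w n|) :
    μ {ω | ∑ n, |w n * (X n ω - δ n)| < lam} ≤
      ENNReal.ofReal ((2 * lam) ^ e / (α ^ e * Nat.factorial e)) := by
  have hX : ∀ n, AEMeasurable (X n) μ := fun n ↦ .of_map_ne_zero (by simp [hunif n])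
  set B := {x : Fin e → ℝ | ∑ n, |x n - δ n| < lam / α}
  have hsub : {ω | ∑ n, |w n * (X n ω - δ n)| < lam} ⊆ (fun ω n ↦ X n ω) ⁻¹' B := by
    intro ω hω
    rw [Set.mem_preimage, Set.mem_ofPred_eq, lt_div_iff₀' hα]
    exact (mul_sum_abs_le_sum_abs_mul _ (fun n _ ↦ hw n) _).trans_lt hω
  calc μ {ω | ∑ n, |w n * (X n ω - δ n)| < lam}
      ≤ μ.map (fun ω n ↦ X n ω) B :=
        (measure_mono hsub).trans (Measure.le_map_apply (aemeasurable_pi_lambda _ hX) B)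
    _ ≤ volume B := by
        rw [hindep.map_fun_eq_volume_restrict_pi hX hunif]
        exact Measure.restrict_apply_le _ B
    _ = ENNReal.ofReal ((2 * lam) ^ e / (α ^ e * Nat.factorial e)) := by
        rw [volume_sum_abs_sub_lt δ (div_pos hlam hα), Fintype.card_fin, mul_div_assoc', div_pow,
          div_div]

/-- the probability that a uniform random clean input activates the
backdoor switch is at most (2λ)^e / (α^e e!). -/
theorem stmt7 {Ω : Type*} [MeasurableSpace Ω] (μ : Measure Ω) [IsProbabilityMeasure μ]
    (e : ℕ) (X : Fin e → Ω → ℝ) (δ w : Fin e → ℝ) (α lam : ℝ)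
    (hα : 0 < α) (hlam : 0 < lam)
    (hmeas : ∀ n, Measurable (X n))
    (hunif : ∀ n, Measure.map (X n) μ = (volume.restrict (Set.Icc (0:ℝ) 1)))
    (hindep : ProbabilityTheory.iIndepFun X μ)
    (hδ : ∀ n, δ n ∈ Set.Icc (0:ℝ) 1)
    (hw : ∀ n, α ≤ |w n|) :
    μ {ω | ∑ n, |w n * (X n ω - δ n)| < lam} ≤
      ENNReal.ofReal ((2 * lam) ^ e / (α ^ e * Nat.factorial e)) :=
  stmt7_general μ e X δ w α lam hα hlam hunif hindep hw
end
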